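/- arXiv:2108.04882 — 3 statements merged into one kernel-verified Lean document; each statement's English description precedes it below -/
import Mathlib

section
/- Let F be a field and let I be an infinite set. Then every derivation of the algebra M_rcf(I,F) is inner: for every derivation d of M_rcf(I,F) there exists y ∈ M_rcf(I,F) such that d(a) = ya − ay for all a ∈ M_rcf(I,F). -/
/-!
Write `E p q` for the matrix units. The `(p, q)` entry of the Leibniz rule for
`E p p * a * E q q = a p q • E p q` reads
`d a p q = a p q * d (E p q) p q - (d (E p p) * a) p q - (a * d (E q q)) p q`.
Let `R = unitRows d` be the matrix whose `p`-th row is the `p`-th row of `d (E p p)`. The relation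
`E p p * E k k = 0` shows that the `q`-th column of `R` is minus that of `d (E q q)`, so `R` is
row-and-column-finite, and `E p o * E o q = E p q` gives `d (E p q) p q = δ p - δ q` for
`δ = unitDiag d o`, `δ p = d (E p o) p o`. Hence `d a = y * a - a * y` for `y = diagonal δ - R`.
-/

/-- The product of two `I × I` matrices, defined via `finsum`; it is well defined on
row-and-column-finite matrices. -/
noncomputable def matMul {F I : Type*} [Field F] (a b : Matrix I I F) : Matrix I I F :=
  fun i j => ∑ᶠ k, a i k * b k j

/-- A matrix has finitely many nonzero entries in each row and in each column. -/
def IsRcf {F I : Type*} [Field F] (a : Matrix I I F) : Prop :=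
  (∀ i, {j | a i j ≠ 0}.Finite) ∧ (∀ j, {i | a i j ≠ 0}.Finite)

open Matrix

section

variable {F I : Type*} [Field F]

lemma transpose_matMul (a b : Matrix I I F) : (matMul a b)ᵀ = matMul bᵀ aᵀ := by
  ext i j
  simp only [transpose_apply, matMul, mul_comm]

lemma isRcf_transpose {a : Matrix I I F} : IsRcf aᵀ ↔ IsRcf a := And.comm

lemma isRcf_zero : IsRcf (0 : Matrix I I F) := by
  constructor <;> intro _ <;> simp

lemma IsRcf.sub {a b : Matrix I I F} (ha : IsRcf a) (hb : IsRcf b) : IsRcf (a - b) := by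
  constructor
  · intro i
    refine ((ha.1 i).union (hb.1 i)).subset fun j hj => ?_
    by_contra h
    simp_all
  · intro j
    refine ((ha.2 j).union (hb.2 j)).subset fun i hi => ?_
    by_contra h
    simp_all

lemma finite_row_support_matMul {a b : Matrix I I F} {i : I} (hai : {k | a i k ≠ 0}.Finite)
    (hb : ∀ k, {j | b k j ≠ 0}.Finite) : {j | matMul a b i j ≠ 0}.Finite := by
  refine (hai.biUnion fun k _ => hb k).subset fun j hj => ?_
  simp only [Set.mem_iUnion, Set.mem_ofPred_eq, exists_prop]
  by_contra! h
  exact hj (finsum_eq_zero_of_forall_eq_zero fun k => by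
    by_cases hk : a i k = 0 <;> simp [hk, h])

lemma IsRcf.matMul {a b : Matrix I I F} (ha : IsRcf a) (hb : IsRcf b) : IsRcf (matMul a b) := by
  refine ⟨fun i => finite_row_support_matMul (ha.1 i) hb.1, fun j => ?_⟩
  have := finite_row_support_matMul ((isRcf_transpose.2 hb).1 j) (isRcf_transpose.2 ha).1
  rwa [← transpose_matMul] at this

lemma hasFiniteSupport_mul_of_row {a b : Matrix I I F} {i : I} (hai : {k | a i k ≠ 0}.Finite)
    (j : I) : Function.HasFiniteSupport fun k => a i k * b k j :=
  hai.subset fun _ hk => left_ne_zero_of_mul hk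

lemma hasFiniteSupport_mul_of_col {a b : Matrix I I F} {j : I} (hbj : {k | b k j ≠ 0}.Finite)
    (i : I) : Function.HasFiniteSupport fun k => a i k * b k j :=
  hbj.subset fun _ hk => right_ne_zero_of_mul hk

-- `∑ᶠ` is `0` on infinite supports, hence the finiteness hypotheses in the next two lemmas.
lemma sub_matMul_apply {a a' : Matrix I I F} (ha : IsRcf a) (ha' : IsRcf a') (b : Matrix I I F)
    (i j : I) : matMul (a - a') b i j = matMul a b i j - matMul a' b i j := by
  simp only [matMul, Matrix.sub_apply, sub_mul]
  exact finsum_sub_distrib (hasFiniteSupport_mul_of_row (ha.1 i) j)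
    (hasFiniteSupport_mul_of_row (ha'.1 i) j)

lemma matMul_sub_apply (a : Matrix I I F) {b b' : Matrix I I F} (hb : IsRcf b) (hb' : IsRcf b')
    (i j : I) : matMul a (b - b') i j = matMul a b i j - matMul a b' i j := by
  simp only [matMul, Matrix.sub_apply, mul_sub]
  exact finsum_sub_distrib (hasFiniteSupport_mul_of_col (hb.2 j) i)
    (hasFiniteSupport_mul_of_col (hb'.2 j) i)

lemma matMul_neg (a b : Matrix I I F) : matMul a (-b) = -matMul a b := by
  ext i j
  simp only [matMul, Matrix.neg_apply, mul_neg, finsum_neg_distrib]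

section Units

variable [DecidableEq I]

lemma isRcf_single (p q : I) (c : F) : IsRcf (single p q c) := by
  constructor
  · intro i
    refine (Set.finite_singleton q).subset fun j hj => ?_
    by_contra h
    exact hj (single_apply_of_col_ne p i (Ne.symm h) c)
  · intro j
    refine (Set.finite_singleton p).subset fun i hi => ?_
    by_contra h
    exact hi (single_apply_of_row_ne (Ne.symm h) q j c)

lemma isRcf_diagonal (v : I → F) : IsRcf (diagonal v) := by
  constructor
  · intro i
    refine (Set.finite_singleton i).subset fun j hj => ?_
    by_contra h
    simp_all [diagonal_apply, eq_comm]
  · intro j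
    refine (Set.finite_singleton j).subset fun i hi => ?_
    by_contra h
    simp_all [diagonal_apply]

lemma single_matMul_apply (p q : I) (c : F) (a : Matrix I I F) (i j : I) :
    matMul (single p q c) a i j = if i = p then c * a q j else 0 := by
  rw [matMul, finsum_eq_single _ q fun k hk => by
    rw [single_apply_of_col_ne _ _ (Ne.symm hk), zero_mul]]
  split_ifs with h
  · rw [h, single_apply_same]
  · rw [single_apply_of_row_ne (Ne.symm h), zero_mul]

lemma matMul_single_apply (a : Matrix I I F) (p q : I) (c : F) (i j : I) :
    matMul a (single p q c) i j = if j = q then a i p * c else 0 := by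
  rw [matMul, finsum_eq_single _ p fun k hk => by
    rw [single_apply_of_row_ne (Ne.symm hk), mul_zero]]
  split_ifs with h
  · rw [h, single_apply_same]
  · rw [single_apply_of_col_ne _ _ (Ne.symm h), mul_zero]

lemma single_matMul_single (p q r : I) (c c' : F) :
    matMul (single p q c) (single q r c') = single p r (c * c') := by
  ext i j
  rw [single_matMul_apply]
  rcases eq_or_ne i p with rfl | hi
  · rcases eq_or_ne j r with rfl | hj
    · simp
    · simp [single_apply_of_col_ne _ _ hj.symm]
  · simp [single_apply_of_row_ne hi.symm, hi]

lemma single_matMul_single_of_ne {q q' : I} (h : q ≠ q') (p r : I) (c c' : F) :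
    matMul (single p q c) (single q' r c') = 0 := by
  ext i j
  rw [single_matMul_apply, single_apply_of_row_ne h.symm, mul_zero, ite_self, Matrix.zero_apply]

lemma single_matMul_matMul_single (i p q j : I) (a : Matrix I I F) :
    matMul (matMul (single i p 1) a) (single q j 1) = single i j (a p q) := by
  ext k l
  rw [matMul_single_apply, single_matMul_apply]
  rcases eq_or_ne k i with rfl | hk
  · rcases eq_or_ne l j with rfl | hl
    · simp
    · simp [single_apply_of_col_ne _ _ hl.symm, hl]
  · simp [single_apply_of_row_ne hk.symm, hk]

lemma diagonal_matMul_apply (v : I → F) (a : Matrix I I F) (i j : I) :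
    matMul (diagonal v) a i j = v i * a i j := by
  rw [matMul, finsum_eq_single _ i fun k hk => by simp [Ne.symm hk]]
  simp

lemma matMul_diagonal_apply (a : Matrix I I F) (v : I → F) (i j : I) :
    matMul a (diagonal v) i j = a i j * v j := by
  rw [matMul, finsum_eq_single _ j fun k hk => by simp [hk]]
  simp

end Units

structure IsRcfDerivation (d : Matrix I I F → Matrix I I F) : Prop where
  isRcf_map : ∀ a, IsRcf a → IsRcf (d a)
  map_add : ∀ a b, IsRcf a → IsRcf b → d (a + b) = d a + d b
  map_smul : ∀ (c : F) (a), IsRcf a → d (c • a) = c • d a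
  map_matMul : ∀ a b, IsRcf a → IsRcf b → d (matMul a b) = matMul (d a) b + matMul a (d b)

namespace IsRcfDerivation

variable {d : Matrix I I F → Matrix I I F}

lemma map_zero (hd : IsRcfDerivation d) : d 0 = 0 := by
  have h := hd.map_add 0 0 isRcf_zero isRcf_zero
  rwa [add_zero, left_eq_add] at h

section Units

variable [DecidableEq I]

lemma map_single_matMul_single_apply (hd : IsRcfDerivation d) (p r r' q : I) :
    d (matMul (single p r (1 : F)) (single r' q 1)) p q =
      d (single p r 1) p r' + d (single r' q 1) r q := by
  rw [hd.map_matMul _ _ (isRcf_single _ _ _) (isRcf_single _ _ _), Matrix.add_apply,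
    matMul_single_apply, single_matMul_apply, if_pos rfl, if_pos rfl, mul_one, one_mul]

lemma map_single_apply_self (hd : IsRcfDerivation d) (p : I) : d (single p p (1 : F)) p p = 0 := by
  have h := hd.map_single_matMul_single_apply p p p p
  rwa [single_matMul_single, one_mul, left_eq_add] at h

lemma map_single_apply_add_map_single_apply (hd : IsRcfDerivation d) {p k : I} (h : p ≠ k) :
    d (single p p (1 : F)) p k + d (single k k 1) p k = 0 := by
  have h' := hd.map_single_matMul_single_apply p p k k
  rwa [single_matMul_single_of_ne h, hd.map_zero, Matrix.zero_apply, eq_comm] at h'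

lemma map_single_apply_eq_add (hd : IsRcfDerivation d) (p q r : I) :
    d (single p q (1 : F)) p q = d (single p r 1) p r + d (single r q 1) r q := by
  rw [← hd.map_single_matMul_single_apply, single_matMul_single, one_mul]

lemma map_apply_eq (hd : IsRcfDerivation d) {a : Matrix I I F} (ha : IsRcf a) (p q : I) :
    d a p q = a p q * d (single p q 1) p q - matMul (d (single p p 1)) a p q -
      matMul a (d (single q q 1)) p q := by
  have hcut : matMul (matMul (single p p 1) a) (single q q 1) = a p q • single p q (1 : F) := by
    rw [single_matMul_matMul_single, smul_single, smul_eq_mul, mul_one]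
  have hrow : ∀ x : Matrix I I F, matMul (matMul (single p p 1) a) x p q = matMul a x p q :=
    fun x => finsum_congr fun k => by rw [single_matMul_apply, if_pos rfl, one_mul]
  have h := congrFun (congrFun (hd.map_matMul _ _ ((isRcf_single p p 1).matMul ha)
    (isRcf_single q q 1)) p) q
  rw [hcut, hd.map_smul _ _ (isRcf_single p q 1), hd.map_matMul _ _ (isRcf_single p p 1) ha,
    Matrix.smul_apply, Matrix.add_apply, matMul_single_apply, if_pos rfl, mul_one, hrow,
    Matrix.add_apply, single_matMul_apply, if_pos rfl, one_mul, smul_eq_mul] at h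
  rw [h]
  ring

def unitRows (d : Matrix I I F → Matrix I I F) : Matrix I I F :=
  of fun p k => d (single p p 1) p k

def unitDiag (d : Matrix I I F → Matrix I I F) (o : I) : I → F :=
  fun p => d (single p o 1) p o

lemma map_single_apply_eq_neg_unitRows (hd : IsRcfDerivation d) (k q : I) :
    d (single q q 1) k q = -unitRows d k q := by
  rcases eq_or_ne k q with rfl | h
  · simp [unitRows, hd.map_single_apply_self]
  · simp [unitRows, eq_neg_iff_add_eq_zero, add_comm, hd.map_single_apply_add_map_single_apply h]

lemma isRcf_unitRows (hd : IsRcfDerivation d) : IsRcf (unitRows d) := by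
  refine ⟨fun p => (hd.isRcf_map _ (isRcf_single p p 1)).1 p, fun q => ?_⟩
  simpa [hd.map_single_apply_eq_neg_unitRows] using (hd.isRcf_map _ (isRcf_single q q 1)).2 q

lemma map_single_apply_eq_unitDiag_sub (hd : IsRcfDerivation d) (o p q : I) :
    d (single p q (1 : F)) p q = unitDiag d o p - unitDiag d o q := by
  have := hd.map_single_apply_eq_add o o q
  rw [hd.map_single_apply_self] at this
  rw [unitDiag, unitDiag, hd.map_single_apply_eq_add p q o]
  linear_combination -this

end Units

theorem exists_eq_matMul_sub_matMul [Nonempty I] (hd : IsRcfDerivation d) :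
    ∃ y, IsRcf y ∧ ∀ a, IsRcf a → d a = matMul y a - matMul a y := by
  classical
  obtain ⟨o⟩ := ‹Nonempty I›
  have hR := hd.isRcf_unitRows
  have hΔ := isRcf_diagonal (unitDiag d o)
  refine ⟨diagonal (unitDiag d o) - unitRows d, hΔ.sub hR, fun a ha => ?_⟩
  ext p q
  have hrow : matMul (d (single p p 1)) a p q = matMul (unitRows d) a p q := rfl
  have hcol : matMul a (d (single q q 1)) p q = -matMul a (unitRows d) p q := by
    rw [← Matrix.neg_apply, ← matMul_neg]
    exact finsum_congr fun k => by rw [hd.map_single_apply_eq_neg_unitRows, Matrix.neg_apply]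
  rw [hd.map_apply_eq ha, hd.map_single_apply_eq_unitDiag_sub o, hrow, hcol, Matrix.sub_apply,
    sub_matMul_apply hΔ hR, matMul_sub_apply _ hΔ hR, diagonal_matMul_apply, matMul_diagonal_apply]
  ring

end IsRcfDerivation

end

/-- Every derivation of the algebra `M_rcf(I,F)` is inner: there is
`y ∈ M_rcf(I,F)` with `d(a) = y*a - a*y` for all `a ∈ M_rcf(I,F)`. -/
theorem stmt_6 (F I : Type*) [Field F] [Infinite I]
    (d : Matrix I I F → Matrix I I F)
    (hmap : ∀ a, IsRcf a → IsRcf (d a))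
    (hadd : ∀ a b, IsRcf a → IsRcf b → d (a + b) = d a + d b)
    (hsmul : ∀ (c : F) (a), IsRcf a → d (c • a) = c • d a)
    (hmul : ∀ a b, IsRcf a → IsRcf b →
      d (matMul a b) = matMul (d a) b + matMul a (d b)) :
    ∃ y : Matrix I I F, IsRcf y ∧
      ∀ a, IsRcf a → d a = matMul y a - matMul a y :=
  (IsRcfDerivation.mk hmap hadd hsmul hmul).exists_eq_matMul_sub_matMul
end

section
/- Let F be a field with char F ≠ 2 and let I be an infinite set. Then for every derivation d of the Lie algebra o_∞(I,F) there exists a matrix y ∈ M_rcf(I,F) with yᵗ = −y such that d(a) = ya − ay for all a ∈ o_∞(I,F). -/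
open Matrix

/-- A finitary matrix: only finitely many nonzero entries. -/
def IsFinitary {F I : Type*} [Field F] (a : Matrix I I F) : Prop :=
  {p : I × I | a p.1 p.2 ≠ 0}.Finite

/-- Membership in `o_∞(I,F)`: a finitary skew-symmetric matrix. -/
def IsSkewFin {F I : Type*} [Field F] (a : Matrix I I F) : Prop :=
  IsFinitary a ∧ aᵀ = -a

/-!
Write `E a b = e_{ab} - e_{ba}`. For `a ≠ b`, `b ≠ c` one has `E a c = [E a b, E b c]`, so the
derivation rule expresses every entry of `d (E a c)` through `d (E a b)` and `d (E b c)`. Choosing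
the middle index `b` away from all indices in sight (possible as `I` is infinite) shows that
`d (E a b)_{pb}` does not depend on `b`; this defines `y_{pa}`, and then `d (E a b) = [y, E a b]`.
The same formula makes `y` skew, its columns are finite because those of `d (E a b)` are, and since
`2 a = ∑ a_{pq} E p q` for skew `a`, linearity and `char F ≠ 2` give `d = [y, ·]` on
`o_∞(I, F)`.
-/

section

variable {F I : Type*} [Field F]

noncomputable def matLie (a b : Matrix I I F) : Matrix I I F := matMul a b - matMul b a

lemma transpose_eq_neg_apply {a : Matrix I I F} (h : aᵀ = -a) (i j : I) : a j i = -a i j := by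
  simpa using congrFun (congrFun h i) j

lemma apply_self_eq_zero_of_transpose_eq_neg {a : Matrix I I F} (h : aᵀ = -a) (h2 : (2 : F) ≠ 0)
    (i : I) : a i i = 0 := by
  have h' : 2 * a i i = 0 := by linear_combination transpose_eq_neg_apply h i i
  exact (mul_eq_zero.mp h').resolve_left h2

lemma IsFinitary.finite_col {a : Matrix I I F} (ha : IsFinitary a) (j : I) :
    {k | a k j ≠ 0}.Finite :=
  (ha.image Prod.fst).subset fun k hk => ⟨(k, j), hk, rfl⟩

lemma IsFinitary.finite_row {a : Matrix I I F} (ha : IsFinitary a) (i : I) :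
    {k | a i k ≠ 0}.Finite :=
  (ha.image Prod.snd).subset fun k hk => ⟨(i, k), hk, rfl⟩

lemma IsSkewFin.zero : IsSkewFin (0 : Matrix I I F) :=
  ⟨by simp [IsFinitary], by simp⟩

lemma IsSkewFin.add {a b : Matrix I I F} (ha : IsSkewFin a) (hb : IsSkewFin b) :
    IsSkewFin (a + b) := by
  refine ⟨(ha.1.union hb.1).subset fun p hp => ?_, by rw [transpose_add, ha.2, hb.2, neg_add]⟩
  by_contra h
  simp_all [not_or]

lemma IsSkewFin.smul {a : Matrix I I F} (ha : IsSkewFin a) (c : F) : IsSkewFin (c • a) :=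
  ⟨ha.1.subset fun p hp => right_ne_zero_of_mul hp, by rw [transpose_smul, ha.2, smul_neg]⟩

section matMul

variable {a b : Matrix I I F}

lemma matMul_add_right (y : Matrix I I F) (ha : IsFinitary a) (hb : IsFinitary b) :
    matMul y (a + b) = matMul y a + matMul y b := by
  ext p q
  simp only [matMul, Matrix.add_apply, mul_add]
  exact finsum_add_distrib ((ha.finite_col q).subset fun k hk => right_ne_zero_of_mul hk)
    ((hb.finite_col q).subset fun k hk => right_ne_zero_of_mul hk)

lemma matMul_add_left (y : Matrix I I F) (ha : IsFinitary a) (hb : IsFinitary b) :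
    matMul (a + b) y = matMul a y + matMul b y := by
  ext p q
  simp only [matMul, Matrix.add_apply, add_mul]
  exact finsum_add_distrib ((ha.finite_row p).subset fun k hk => left_ne_zero_of_mul hk)
    ((hb.finite_row p).subset fun k hk => left_ne_zero_of_mul hk)

lemma matMul_smul_right (y a : Matrix I I F) (c : F) : matMul y (c • a) = c • matMul y a := by
  ext p q
  simp only [matMul, Matrix.smul_apply, smul_eq_mul, mul_finsum, mul_left_comm c]

lemma matMul_smul_left (y a : Matrix I I F) (c : F) : matMul (c • a) y = c • matMul a y := by
  ext p q
  simp only [matMul, Matrix.smul_apply, smul_eq_mul, mul_finsum, mul_assoc]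

lemma matLie_add_right (y : Matrix I I F) (ha : IsFinitary a) (hb : IsFinitary b) :
    matLie y (a + b) = matLie y a + matLie y b := by
  rw [matLie, matLie, matLie, matMul_add_right y ha hb, matMul_add_left y ha hb]
  abel

lemma matLie_smul_right (y a : Matrix I I F) (c : F) : matLie y (c • a) = c • matLie y a := by
  rw [matLie, matLie, matMul_smul_right, matMul_smul_left, smul_sub]

lemma matLie_zero_right (y : Matrix I I F) : matLie y 0 = 0 := by
  simpa using matLie_smul_right y 0 0

end matMul

section skewSingle

open Classical in
noncomputable def skewSingle (i j : I) : Matrix I I F :=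
  fun k l => (if k = i ∧ l = j then 1 else 0) - (if k = j ∧ l = i then 1 else 0)

open Classical in
lemma skewSingle_apply (i j k l : I) :
    (skewSingle i j : Matrix I I F) k l =
      (if k = i ∧ l = j then 1 else 0) - (if k = j ∧ l = i then 1 else 0) := rfl

lemma skewSingle_swap (i j : I) : (skewSingle j i : Matrix I I F) = -skewSingle i j := by
  ext k l
  simp only [skewSingle_apply, Matrix.neg_apply]
  ring

lemma isSkewFin_skewSingle (i j : I) : IsSkewFin (skewSingle i j : Matrix I I F) := by
  refine ⟨(Set.toFinite {(i, j), (j, i)}).subset fun p hp => ?_, ?_⟩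
  · obtain ⟨k, l⟩ := p
    contrapose! hp
    simp only [Set.mem_insert_iff, Set.mem_singleton_iff, Prod.mk.injEq, not_or] at hp
    simp [skewSingle_apply, hp.1, hp.2]
  · ext k l
    simp only [transpose_apply, Matrix.neg_apply, skewSingle_apply]
    rw [neg_sub]
    congr 2 <;> simp only [eq_iff_iff] <;> tauto

open Classical in
lemma finsum_mul_ite_eq_and (f : I → F) (i : I) (P : Prop) :
    ∑ᶠ k, f k * (if k = i ∧ P then 1 else 0) = if P then f i else 0 := by
  rw [finsum_eq_single _ i fun k hk => by simp [hk]]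
  simp

open Classical in
lemma finsum_ite_and_eq_mul (f : I → F) (i : I) (P : Prop) :
    ∑ᶠ k, (if P ∧ k = i then 1 else 0) * f k = if P then f i else 0 := by
  rw [finsum_eq_single _ i fun k hk => by simp [hk]]
  simp

open Classical in
lemma matMul_skewSingle (a : Matrix I I F) (i j p q : I) :
    matMul a (skewSingle i j) p q =
      (if q = j then a p i else 0) - (if q = i then a p j else 0) := by
  simp only [matMul, skewSingle_apply, mul_sub]
  rw [finsum_sub_distrib, finsum_mul_ite_eq_and, finsum_mul_ite_eq_and]
  · exact (Set.finite_singleton i).subset fun k hk => by by_contra h; simp_all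
  · exact (Set.finite_singleton j).subset fun k hk => by by_contra h; simp_all

open Classical in
lemma skewSingle_matMul (a : Matrix I I F) (i j p q : I) :
    matMul (skewSingle i j) a p q =
      (if p = i then a j q else 0) - (if p = j then a i q else 0) := by
  simp only [matMul, skewSingle_apply, sub_mul]
  rw [finsum_sub_distrib, finsum_ite_and_eq_mul, finsum_ite_and_eq_mul]
  · exact (Set.finite_singleton j).subset fun k hk => by by_contra h; simp_all
  · exact (Set.finite_singleton i).subset fun k hk => by by_contra h; simp_all

lemma matLie_skewSingle_skewSingle {a b c : I} (hab : a ≠ b) (hbc : b ≠ c) :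
    matLie (skewSingle a b) (skewSingle b c) = (skewSingle a c : Matrix I I F) := by
  ext p q
  simp only [matLie, Matrix.sub_apply, matMul_skewSingle, skewSingle_apply]
  grind

lemma skewSingle_self (i : I) : (skewSingle i i : Matrix I I F) = 0 := by
  ext k l
  simp [skewSingle_apply]

end skewSingle

lemma Infinite.exists_ne_ne [Infinite I] (p a : I) : ∃ j, j ≠ p ∧ j ≠ a := by
  classical
  obtain ⟨j, hj⟩ := Infinite.exists_notMem_finset ({p, a} : Finset I)
  simp only [Finset.mem_insert, Finset.mem_singleton, not_or] at hj
  exact ⟨j, hj⟩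

noncomputable def freshIndex [Infinite I] (p a : I) : I := (Infinite.exists_ne_ne p a).choose

lemma freshIndex_ne_left [Infinite I] (p a : I) : freshIndex p a ≠ p :=
  (Infinite.exists_ne_ne p a).choose_spec.1

lemma freshIndex_ne_right [Infinite I] (p a : I) : freshIndex p a ≠ a :=
  (Infinite.exists_ne_ne p a).choose_spec.2

noncomputable def derivationMatrix [Infinite I] (d : Matrix I I F → Matrix I I F) :
    Matrix I I F :=
  fun p a => d (skewSingle a (freshIndex p a)) p (freshIndex p a)

lemma IsSkewFin.sum_smul_skewSingle {a : Matrix I I F} (ha : IsSkewFin a) :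
    ∑ p ∈ ha.1.toFinset, a p.1 p.2 • skewSingle p.1 p.2 = (2 : F) • a := by
  classical
  have hsum : ∀ k l, ∑ p ∈ ha.1.toFinset, a p.1 p.2 * (if k = p.1 ∧ l = p.2 then 1 else 0)
      = a k l := by
    intro k l
    rw [Finset.sum_eq_single (k, l)]
    · simp
    · rintro ⟨k', l'⟩ _ hne
      simp only [mul_ite, mul_one, mul_zero, ite_eq_right_iff, and_imp]
      rintro rfl rfl
      exact absurd rfl hne
    · intro h
      have hkl : a k l = 0 := by_contra fun hne => h (ha.1.mem_toFinset.2 hne)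
      simp [hkl]
  have hsum' : ∀ k l, ∑ p ∈ ha.1.toFinset, a p.1 p.2 * (if k = p.2 ∧ l = p.1 then 1 else 0)
      = a l k := fun k l => by simpa only [and_comm] using hsum l k
  ext k l
  simp only [Matrix.sum_apply, Matrix.smul_apply, skewSingle_apply, smul_eq_mul, mul_sub,
    Finset.sum_sub_distrib, hsum, hsum', transpose_eq_neg_apply ha.2 k l]
  ring

structure IsSkewFinDerivation (d : Matrix I I F → Matrix I I F) : Prop where
  map_isSkewFin : ∀ a, IsSkewFin a → IsSkewFin (d a)
  map_add : ∀ a b, IsSkewFin a → IsSkewFin b → d (a + b) = d a + d b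
  map_smul : ∀ (c : F) (a), IsSkewFin a → d (c • a) = c • d a
  map_matLie : ∀ a b, IsSkewFin a → IsSkewFin b →
    d (matLie a b) = matLie (d a) b + matLie a (d b)

namespace IsSkewFinDerivation

variable {d : Matrix I I F → Matrix I I F}

lemma map_zero (hd : IsSkewFinDerivation d) : d 0 = 0 := by
  simpa using hd.map_smul 0 0 IsSkewFin.zero

lemma map_skewSingle_swap (hd : IsSkewFinDerivation d) (i j : I) :
    d (skewSingle j i) = -d (skewSingle i j) := by
  rw [skewSingle_swap, ← neg_one_smul F, hd.map_smul _ _ (isSkewFin_skewSingle i j), neg_one_smul]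

lemma apply_skewSingle_swap (hd : IsSkewFinDerivation d) (i j p q : I) :
    d (skewSingle i j) q p = -d (skewSingle i j) p q :=
  transpose_eq_neg_apply (hd.map_isSkewFin _ (isSkewFin_skewSingle i j)).2 p q

lemma apply_skewSingle_diag (hd : IsSkewFinDerivation d) (h2 : (2 : F) ≠ 0) (i j k : I) :
    d (skewSingle i j) k k = 0 :=
  apply_self_eq_zero_of_transpose_eq_neg (hd.map_isSkewFin _ (isSkewFin_skewSingle i j)).2 h2 k

lemma map_skewSingle {a b c : I} (hd : IsSkewFinDerivation d) (hab : a ≠ b) (hbc : b ≠ c) :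
    d (skewSingle a c) = matLie (d (skewSingle a b)) (skewSingle b c)
      + matLie (skewSingle a b) (d (skewSingle b c)) := by
  rw [← hd.map_matLie _ _ (isSkewFin_skewSingle a b) (isSkewFin_skewSingle b c),
    matLie_skewSingle_skewSingle hab hbc]

open Classical in
lemma apply_skewSingle_of_ne {a b c p q : I} (hd : IsSkewFinDerivation d) (hab : a ≠ b)
    (hbc : b ≠ c) (hpb : p ≠ b) (hqb : q ≠ b) :
    d (skewSingle a c) p q =
      (if q = c then d (skewSingle a b) p b else 0) + (if p = c then d (skewSingle a b) b q else 0)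
        + (if p = a then d (skewSingle b c) b q else 0)
        + (if q = a then d (skewSingle b c) p b else 0) := by
  rw [hd.map_skewSingle hab hbc]
  simp only [matLie, Matrix.add_apply, Matrix.sub_apply, matMul_skewSingle, skewSingle_matMul, hpb,
    hqb, if_false]
  ring

lemma apply_skewSingle_apply_add {i j k : I} (hd : IsSkewFinDerivation d) (hij : i ≠ j)
    (hjk : j ≠ k) (hik : i ≠ k) :
    d (skewSingle i k) i k = d (skewSingle i j) i j + d (skewSingle j k) j k := by
  simpa [hik, hik.symm] using hd.apply_skewSingle_of_ne (p := i) (q := k) hij hjk hij hjk.symm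

lemma apply_skewSingle_apply_comm (hd : IsSkewFinDerivation d) (i j : I) :
    d (skewSingle j i) j i = d (skewSingle i j) i j := by
  rw [hd.map_skewSingle_swap, Matrix.neg_apply, hd.apply_skewSingle_swap, neg_neg]

/-- `(i, j) ↦ d (skewSingle i j) i j` is symmetric and additive along triangles
(`apply_skewSingle_apply_add`), so going around a triangle twice forces it to vanish. -/
lemma apply_skewSingle_apply_eq_zero [Infinite I] (hd : IsSkewFinDerivation d) (h2 : (2 : F) ≠ 0)
    (i j : I) : d (skewSingle i j) i j = 0 := by
  rcases eq_or_ne i j with rfl | hij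
  · rw [skewSingle_self, hd.map_zero, Matrix.zero_apply]
  obtain ⟨k, hki, hkj⟩ := Infinite.exists_ne_ne i j
  have h₁ := hd.apply_skewSingle_apply_add hki hij hkj
  have h₂ := hd.apply_skewSingle_apply_add hkj hij.symm hki
  have h₃ := hd.apply_skewSingle_apply_comm i j
  have h : 2 * d (skewSingle i j) i j = 0 := by linear_combination -h₁ - h₂ - h₃
  exact (mul_eq_zero.mp h).resolve_left h2

lemma apply_skewSingle_apply_right_eq [Infinite I] {a b b' p : I} (hd : IsSkewFinDerivation d)
    (h2 : (2 : F) ≠ 0) (hab : a ≠ b) (hab' : a ≠ b') (hpb : p ≠ b) (hpb' : p ≠ b') :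
    d (skewSingle a b) p b = d (skewSingle a b') p b' := by
  rcases eq_or_ne p a with rfl | hpa
  · rw [hd.apply_skewSingle_apply_eq_zero h2, hd.apply_skewSingle_apply_eq_zero h2]
  rcases eq_or_ne b b' with rfl | hbb'
  · rfl
  refine Eq.symm ?_
  simpa [hpb', hpa, hab'.symm] using
    hd.apply_skewSingle_of_ne (p := p) (q := b') hab hbb' hpb hbb'.symm

lemma apply_skewSingle_apply_right [Infinite I] {a b p : I} (hd : IsSkewFinDerivation d)
    (h2 : (2 : F) ≠ 0) (hab : a ≠ b) (hpb : p ≠ b) :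
    d (skewSingle a b) p b = derivationMatrix d p a :=
  hd.apply_skewSingle_apply_right_eq h2 hab (freshIndex_ne_right p a).symm hpb
    (freshIndex_ne_left p a).symm

lemma derivationMatrix_transpose [Infinite I] (hd : IsSkewFinDerivation d) (h2 : (2 : F) ≠ 0) :
    (derivationMatrix d)ᵀ = -derivationMatrix d := by
  ext q p
  rw [transpose_apply, Matrix.neg_apply]
  rcases eq_or_ne p q with rfl | hpq
  · rw [derivationMatrix, hd.apply_skewSingle_apply_eq_zero h2, neg_zero]
  obtain ⟨j, hjp, hjq⟩ := Infinite.exists_ne_ne p q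
  rw [← hd.apply_skewSingle_apply_right h2 hjp.symm hjq.symm,
    ← hd.apply_skewSingle_apply_right h2 hjq.symm hjp.symm]
  have h := congrFun (congrFun (hd.map_skewSingle hpq hjq.symm) q) j
  simp only [matLie, Matrix.add_apply, Matrix.sub_apply, matMul_skewSingle, skewSingle_matMul, hjp,
    hjq, hpq.symm, hjq.symm, hd.apply_skewSingle_diag h2, if_true, if_false] at h
  linear_combination h

lemma isRcf_derivationMatrix [Infinite I] (hd : IsSkewFinDerivation d) (h2 : (2 : F) ≠ 0) :
    IsRcf (derivationMatrix d) := by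
  have hcol : ∀ a, {p | derivationMatrix d p a ≠ 0}.Finite := by
    intro a
    set j := freshIndex a a
    have hja : j ≠ a := freshIndex_ne_left a a
    refine (((hd.map_isSkewFin _ (isSkewFin_skewSingle a j)).1.finite_col j).insert j).subset ?_
    intro p hp
    rcases eq_or_ne p j with rfl | hpj
    · exact Set.mem_insert _ _
    · refine Set.mem_insert_of_mem _ ?_
      rwa [Set.mem_ofPred_eq, hd.apply_skewSingle_apply_right h2 hja.symm hpj]
  refine ⟨fun a => (hcol a).subset fun q hq => ?_, hcol⟩
  rwa [Set.mem_ofPred_eq, transpose_eq_neg_apply (hd.derivationMatrix_transpose h2), neg_ne_zero]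

lemma map_skewSingle_eq_matLie [Infinite I] (hd : IsSkewFinDerivation d) (h2 : (2 : F) ≠ 0)
    (i k : I) : d (skewSingle i k) = matLie (derivationMatrix d) (skewSingle i k) := by
  rcases eq_or_ne i k with rfl | hik
  · rw [skewSingle_self, hd.map_zero, matLie_zero_right]
  set y := derivationMatrix d
  have hy := transpose_eq_neg_apply (hd.derivationMatrix_transpose h2)
  ext p q
  classical
  obtain ⟨j, hj⟩ := Infinite.exists_notMem_finset ({i, k, p, q} : Finset I)
  obtain ⟨hji, hjk, hjp, hjq⟩ : j ≠ i ∧ j ≠ k ∧ j ≠ p ∧ j ≠ q := by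
    simpa [not_or] using hj
  have h₁ : d (skewSingle i j) p j = y p i := hd.apply_skewSingle_apply_right h2 hji.symm hjp.symm
  have h₂ : d (skewSingle i j) j q = y i q := by
    rw [hd.apply_skewSingle_swap, hd.apply_skewSingle_apply_right h2 hji.symm hjq.symm, ← hy]
  have h₃ : d (skewSingle j k) j q = -y k q := by
    rw [hd.map_skewSingle_swap, Matrix.neg_apply, hd.apply_skewSingle_swap, neg_neg,
      hd.apply_skewSingle_apply_right h2 hjk.symm hjq.symm, hy]
  have h₄ : d (skewSingle j k) p j = -y p k := by
    rw [hd.map_skewSingle_swap, Matrix.neg_apply,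
      hd.apply_skewSingle_apply_right h2 hjk.symm hjp.symm]
  rw [hd.apply_skewSingle_of_ne hji.symm hjk hjp.symm hjq.symm, h₁, h₂, h₃, h₄, matLie,
    Matrix.sub_apply, matMul_skewSingle, skewSingle_matMul]
  split_ifs <;> ring

lemma eq_matLie_derivationMatrix [Infinite I] (hd : IsSkewFinDerivation d) (h2 : (2 : F) ≠ 0)
    {a : Matrix I I F} (ha : IsSkewFin a) : d a = matLie (derivationMatrix d) a := by
  set y := derivationMatrix d
  set s := ∑ p ∈ ha.1.toFinset, a p.1 p.2 • (skewSingle p.1 p.2 : Matrix I I F) with hs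
  have hsum : IsSkewFin s ∧ d s = matLie y s := by
    refine Finset.sum_induction _ (fun m => IsSkewFin m ∧ d m = matLie y m) ?_ ?_ ?_
    · rintro m n ⟨hm, hdm⟩ ⟨hn, hdn⟩
      exact ⟨hm.add hn, by rw [hd.map_add _ _ hm hn, hdm, hdn, matLie_add_right y hm.1 hn.1]⟩
    · exact ⟨IsSkewFin.zero, by rw [hd.map_zero, matLie_zero_right]⟩
    · intro p _
      have hE : IsSkewFin (skewSingle p.1 p.2 : Matrix I I F) := isSkewFin_skewSingle _ _
      exact ⟨hE.smul _, by
        rw [hd.map_smul _ _ hE, hd.map_skewSingle_eq_matLie h2, matLie_smul_right]⟩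
  have h := hsum.2
  rw [hs, ha.sum_smul_skewSingle, hd.map_smul _ _ ha, matLie_smul_right] at h
  exact smul_right_injective _ h2 h

end IsSkewFinDerivation

end

/-- For `char F ≠ 2` and `I` infinite, every derivation `d` of the Lie
algebra `o_∞(I,F)` is of the form `d(a) = y*a - a*y` for some skew-symmetric
`y ∈ M_rcf(I,F)`. -/
theorem stmt_10 (F I : Type*) [Field F] [Infinite I] (hchar : ringChar F ≠ 2)
    (d : Matrix I I F → Matrix I I F)
    (hmap : ∀ a, IsSkewFin a → IsSkewFin (d a))
    (hadd : ∀ a b, IsSkewFin a → IsSkewFin b → d (a + b) = d a + d b)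
    (hsmul : ∀ (c : F) (a), IsSkewFin a → d (c • a) = c • d a)
    (hbracket : ∀ a b, IsSkewFin a → IsSkewFin b →
      d (matMul a b - matMul b a) =
        (matMul (d a) b - matMul b (d a)) + (matMul a (d b) - matMul (d b) a)) :
    ∃ y : Matrix I I F, IsRcf y ∧ yᵀ = -y ∧
      ∀ a, IsSkewFin a → d a = matMul y a - matMul a y := by
  have h2 : (2 : F) ≠ 0 := Ring.two_ne_zero hchar
  have hd : IsSkewFinDerivation d := ⟨hmap, hadd, hsmul, hbracket⟩
  exact ⟨derivationMatrix d, hd.isRcf_derivationMatrix h2, hd.derivationMatrix_transpose h2,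
    fun a ha => hd.eq_matLie_derivationMatrix h2 ha⟩
end

section
/- Let F be a field and let V be an infinite-dimensional vector space over F. Then every F-algebra automorphism φ of the algebra End_fin(V) of finite-rank endomorphisms of V is a conjugation by an element of GL(V): there exists an invertible F-linear transformation g of V such that φ(a) = g⁻¹ ∘ a ∘ g for all a ∈ End_fin(V). -/
/-- An endomorphism has finite rank, i.e. finite-dimensional range. -/
def FinRank {F V : Type*} [Field F] [AddCommGroup V] [Module F V]
    (a : Module.End F V) : Prop :=
  Module.Finite F (LinearMap.range a)

section Aux
variable {F V : Type*} [Field F] [AddCommGroup V] [Module F V]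

lemma finRank_of_le {a b : Module.End F V} (hb : FinRank b)
    (h : LinearMap.range a ≤ LinearMap.range b) : FinRank a := by
  unfold FinRank at *
  have : FiniteDimensional F (LinearMap.range b) := hb
  exact Submodule.finiteDimensional_of_le h

lemma finRank_smulRight (f : V →ₗ[F] F) (v : V) : FinRank (f.smulRight v) := by
  unfold FinRank
  have h : LinearMap.range (f.smulRight v) ≤ Submodule.span F {v} := by
    rintro _ ⟨x, rfl⟩
    exact Submodule.smul_mem _ _ (Submodule.mem_span_singleton_self v)
  have : FiniteDimensional F (Submodule.span F ({v} : Set V)) :=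
    FiniteDimensional.span_singleton ..
  exact Submodule.finiteDimensional_of_le h

lemma finRank_zero : FinRank (0 : Module.End F V) := by
  unfold FinRank
  rw [LinearMap.range_zero]
  infer_instance

lemma finRank_mul_left {a : Module.End F V} (b : Module.End F V) (ha : FinRank a) :
    FinRank (a * b) :=
  finRank_of_le ha (by rintro _ ⟨x, rfl⟩; exact ⟨b x, rfl⟩)

lemma finRank_smul (c : F) {a : Module.End F V} (ha : FinRank a) : FinRank (c • a) :=
  finRank_of_le ha (by rintro _ ⟨x, rfl⟩; exact ⟨c • x, by simp⟩)

lemma exists_dual_one_zero {v : V} (p : Submodule F V) (hv : v ∉ p) :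
    ∃ f : V →ₗ[F] F, f v = 1 ∧ ∀ w ∈ p, f w = 0 := by
  obtain ⟨f, hf, hmap⟩ := p.exists_dual_map_eq_bot_of_notMem hv inferInstance
  refine ⟨(f v)⁻¹ • f, by simp [inv_mul_cancel₀ hf], fun w hw => ?_⟩
  have : f w = 0 := by
    have : f w ∈ p.map f := ⟨w, hw, rfl⟩
    rwa [hmap, Submodule.mem_bot] at this
  simp [this]

end Aux

section Aux2
variable {F V : Type*} [Field F] [AddCommGroup V] [Module F V]

lemma rank_one_decomp {e' : Module.End F V} (hne : e' ≠ 0) (hid : e' * e' = e')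
    (hloc : ∀ c : Module.End F V, FinRank c → ∃ μ : F, e' * c * e' = μ • e') :
    ∃ (v₁ : V) (f₁ : V →ₗ[F] F), e' = f₁.smulRight v₁ ∧ f₁ v₁ = 1 := by
  obtain ⟨x₀, hx₀⟩ : ∃ x₀, e' x₀ ≠ 0 := by
    by_contra h
    push_neg at h
    exact hne (LinearMap.ext fun x => by simp [h x])
  set v₁ := e' x₀ with hv₁def
  have hspan : ∀ y, e' y ∈ Submodule.span F {v₁} := by
    intro y
    by_contra hy
    obtain ⟨f, hf1, hf0⟩ := exists_dual_one_zero (Submodule.span F {v₁}) hy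
    have hfv₁ : f v₁ = 0 := hf0 _ (Submodule.mem_span_singleton_self v₁)
    obtain ⟨μ, hμ⟩ := hloc (f.smulRight x₀) (finRank_smulRight f x₀)
    have happ : ∀ z, f (e' z) • v₁ = μ • e' z := by
      intro z
      have := LinearMap.congr_fun hμ z
      simpa [Module.End.mul_apply] using this
    have hμ0 : μ = 0 := by
      have := happ x₀
      rw [hfv₁, zero_smul] at this
      rcases smul_eq_zero.mp this.symm with h | h
      · exact h
      · exact absurd h hx₀
    have := happ y
    rw [hf1, one_smul, hμ0, zero_smul] at this
    exact hx₀ this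
  have hv₁ : v₁ ≠ 0 := hx₀
  set f₁ : V →ₗ[F] F :=
    (LinearEquiv.coord F V v₁ hv₁).toLinearMap.comp
      (LinearMap.codRestrict (Submodule.span F {v₁}) e' hspan) with hf₁def
  have key : ∀ y, f₁ y • v₁ = e' y := by
    intro y
    have := LinearEquiv.coord_apply_smul F V v₁ hv₁ ⟨e' y, hspan y⟩
    simpa [hf₁def] using this
  have hf₁v₁ : f₁ v₁ = 1 := by
    have h1 : f₁ v₁ • v₁ = v₁ := by
      rw [key v₁, hv₁def]
      exact LinearMap.congr_fun hid x₀
    have : (f₁ v₁ - 1) • v₁ = 0 := by rw [sub_smul, one_smul, h1, sub_self]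
    rcases smul_eq_zero.mp this with h | h
    · exact sub_eq_zero.mp h
    · exact absurd h hv₁
  exact ⟨v₁, f₁, LinearMap.ext fun y => by rw [LinearMap.smulRight_apply, key], hf₁v₁⟩

end Aux2

/-- For an infinite-dimensional vector space `V` over a field `F`, every
`F`-algebra automorphism `φ` of `End_fin(V)` is conjugation by an element `g ∈ GL(V)`:
`φ(a) = g⁻¹ ∘ a ∘ g` for all finite-rank `a`. -/
theorem stmt_15 (F V : Type*) [Field F] [AddCommGroup V] [Module F V]
    (hV : ¬ Module.Finite F V)
    (φ : Module.End F V → Module.End F V)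
    (hbij : Set.BijOn φ {a : Module.End F V | FinRank a} {a : Module.End F V | FinRank a})
    (hadd : ∀ a b, FinRank a → FinRank b → φ (a + b) = φ a + φ b)
    (hsmul : ∀ (c : F) (a), FinRank a → φ (c • a) = c • φ a)
    (hmul : ∀ a b, FinRank a → FinRank b → φ (a * b) = φ a * φ b) :
    ∃ g : V ≃ₗ[F] V, ∀ a, FinRank a →
      φ a = g.symm.toLinearMap ∘ₗ a ∘ₗ g.toLinearMap := by
  have hnt : Nontrivial V := by
    by_contra h
    rw [not_nontrivial_iff_subsingleton] at h
    have : Finite V := Finite.of_subsingleton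
    exact hV Module.Finite.of_finite
  obtain ⟨v₀, hv₀⟩ := exists_ne (0 : V)
  obtain ⟨f₀, hf₀, -⟩ := exists_dual_one_zero (⊥ : Submodule F V) (by simpa using hv₀)
  set e : Module.End F V := f₀.smulRight v₀ with he
  have heFR : FinRank e := finRank_smulRight f₀ v₀
  have hee : e * e = e := LinearMap.ext fun x => by
    simp [he, Module.End.mul_apply, hf₀]
  have hφ0 : φ 0 = 0 := by
    have h0 := hadd 0 0 finRank_zero finRank_zero
    rw [add_zero] at h0
    exact (left_eq_add.mp h0)
  have injφ : ∀ a b : Module.End F V, FinRank a → FinRank b → φ a = φ b → a = b :=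
    fun a b ha hb h => hbij.injOn ha hb h
  set e' : Module.End F V := φ e with he'
  have he'FR : FinRank e' := hbij.mapsTo heFR
  have he'id : e' * e' = e' := by rw [he', ← hmul e e heFR heFR, hee]
  have he'ne : e' ≠ 0 := by
    intro h
    have : e = 0 := injφ e 0 heFR finRank_zero (by rw [hφ0]; exact h)
    have hev₀ : e v₀ = v₀ := by simp [he, hf₀]
    rw [this] at hev₀
    exact hv₀ hev₀.symm
  have hloc : ∀ c : Module.End F V, FinRank c → ∃ μ : F, e' * c * e' = μ • e' := by
    intro c hc
    obtain ⟨a, haFR, rfl⟩ := hbij.surjOn hc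
    refine ⟨f₀ (a v₀), ?_⟩
    have heae : e * a * e = f₀ (a v₀) • e := LinearMap.ext fun x => by
      simp [he, Module.End.mul_apply, smul_smul, mul_comm]
    have hFR1 : FinRank (e * a) := finRank_mul_left a heFR
    have hFR2 : FinRank (e * a * e) := finRank_mul_left e hFR1
    calc e' * φ a * e' = φ (e * a) * φ e := by rw [he', hmul e a heFR haFR]
      _ = φ (e * a * e) := (hmul (e * a) e hFR1 heFR).symm
      _ = φ (f₀ (a v₀) • e) := by rw [heae]
      _ = f₀ (a v₀) • e' := by rw [hsmul _ e heFR, he']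
  obtain ⟨v₁, f₁, he'eq, hf₁v₁⟩ := rank_one_decomp he'ne he'id hloc
  set h : V →ₗ[F] V :=
    { toFun := fun v => φ (f₀.smulRight v) v₁
      map_add' := fun v w => by
        have : f₀.smulRight (v + w) = f₀.smulRight v + f₀.smulRight w :=
          LinearMap.ext fun x => by simp [smul_add]
        rw [this, hadd _ _ (finRank_smulRight f₀ v) (finRank_smulRight f₀ w)]
        simp
      map_smul' := fun c v => by
        have : f₀.smulRight (c • v) = c • f₀.smulRight v :=
          LinearMap.ext fun x => by
            simp only [LinearMap.smulRight_apply, LinearMap.smul_apply]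
            exact smul_comm _ _ _
        rw [this, hsmul c _ (finRank_smulRight f₀ v)]
        simp } with hh
  have hhapp : ∀ v, h v = φ (f₀.smulRight v) v₁ := fun v => rfl
  have hcomm : ∀ a : Module.End F V, FinRank a → ∀ v, φ a (h v) = h (a v) := by
    intro a ha v
    have h1 : a * f₀.smulRight v = f₀.smulRight (a v) :=
      LinearMap.ext fun x => by simp [Module.End.mul_apply]
    rw [hhapp, hhapp, ← Module.End.mul_apply, ← hmul a _ ha (finRank_smulRight f₀ v), h1]
  have hphib : ∀ v, φ (f₀.smulRight v) = f₁.smulRight (h v) := by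
    intro v
    have hbe : f₀.smulRight v * e = f₀.smulRight v := LinearMap.ext fun x => by
      simp [he, Module.End.mul_apply, hf₀]
    have : φ (f₀.smulRight v) = φ (f₀.smulRight v) * e' := by
      rw [he', ← hmul _ e (finRank_smulRight f₀ v) heFR, hbe]
    rw [this, he'eq]
    exact LinearMap.ext fun x => by
      simp [Module.End.mul_apply, hhapp]
  have hinj : Function.Injective h := by
    intro v w hvw
    rw [← sub_eq_zero]
    have hz : h (v - w) = 0 := by rw [map_sub, hvw, sub_self]
    have : φ (f₀.smulRight (v - w)) = 0 := by
      rw [hphib, hz]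
      exact LinearMap.ext fun x => by simp
    have hb0 : f₀.smulRight (v - w) = 0 :=
      injφ _ 0 (finRank_smulRight f₀ (v - w)) finRank_zero (by rw [this, hφ0])
    have := LinearMap.congr_fun hb0 v₀
    simpa [hf₀] using this
  have hsurj : Function.Surjective h := by
    intro w
    obtain ⟨a, haFR, hfa⟩ := hbij.surjOn (finRank_smulRight f₁ w : FinRank (f₁.smulRight w))
    have hbe' : f₁.smulRight w * e' = f₁.smulRight w := by
      rw [he'eq]
      exact LinearMap.ext fun x => by simp [Module.End.mul_apply, hf₁v₁]
    have h1 : φ (a * e) = φ a := by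
      rw [hmul a e haFR heFR, ← he', hfa, hbe']
    have h2 : a * e = a := injφ _ _ (finRank_mul_left e haFR) haFR h1
    have h3 : f₀.smulRight (a v₀) = a * e := LinearMap.ext fun x => by
      simp [he, Module.End.mul_apply]
    refine ⟨a v₀, ?_⟩
    rw [hhapp, h3, h1, hfa]
    simp [hf₁v₁]
  set g : V ≃ₗ[F] V := (LinearEquiv.ofBijective h ⟨hinj, hsurj⟩).symm with hg
  refine ⟨g, fun a ha => ?_⟩
  refine LinearMap.ext fun x => ?_
  have hx : (g.symm) (g x) = x := g.symm_apply_apply x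
  have hgx : g.symm.toLinearMap = h := rfl
  have hx : h (g x) = x := g.symm_apply_apply x
  calc φ a x = φ a (h (g x)) := by rw [hx]
    _ = h (a (g x)) := hcomm a ha (g x)
    _ = (g.symm.toLinearMap ∘ₗ a ∘ₗ g.toLinearMap) x := rfl
end
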